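/- Suppose k ≤ l ≤ n and k + l ≥ n. For A + b ∈ Graff(k,n) and B + c ∈ Graff(l,n), the relative volume (uniform probability) of Ψ₊(A+b) = {l-flats containing A+b} in Graff(l,n) equals the relative volume of Ψ₋(B+c) = {k-flats contained in B+c} in Graff(k,n), and the common value is (l+1)!(n−k)! ∏_{j=l−k+1}^{l+1} ω_j / ((n+1)!(l−k)! ∏_{j=n−k+1}^{n+1} ω_j), where ω_m = π^{m/2}/Γ(1+m/2) is the volume of the unit ball in ℝ^m. -/

import Mathlib

open scoped Real

/-- `ω m = π^{m/2} / Γ(1 + m/2)`, the volume of the unit ball in `ℝᵐ`. -/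
noncomputable def unitBallVol (m : ℕ) : ℝ :=
  Real.pi ^ ((m : ℝ) / 2) / Real.Gamma (1 + (m : ℝ) / 2)

/-- The volume of the Grassmannian `Gr(k,n)` with respect to its natural invariant
measure: `binom(n,k) ∏_{j=1}^n ω_j / (∏_{j=1}^k ω_j · ∏_{j=1}^{n−k} ω_j)`. -/
noncomputable def volGr (k n : ℕ) : ℝ :=
  (n.choose k : ℝ) * (∏ j ∈ Finset.Icc 1 n, unitBallVol j) /
    ((∏ j ∈ Finset.Icc 1 k, unitBallVol j) * (∏ j ∈ Finset.Icc 1 (n - k), unitBallVol j))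

/-!
With `G m = m! · ω₁ ⋯ ωₘ`, the volume formula reads `Vol Gr(k,n) = G n / (G k · G (n-k))`, a
binomial coefficient in `G`. Both ratios then telescope to the same quotient
`G (l+1) · G (n-k) / (G (n+1) · G (l-k))`, and so does the stated value, since
`∏_{j=a+1}^{b} ω_j = G b · a! / (G a · b!)`.
-/

open Finset
open scoped Nat

lemma unitBallVol_pos (m : ℕ) : 0 < unitBallVol m :=
  div_pos (Real.rpow_pos_of_pos Real.pi_pos _) (Real.Gamma_pos_of_pos (by positivity))

lemma Finset.prod_Icc_add_one_eq_div {K : Type*} [Field K] (f : ℕ → K) {a b : ℕ} (hab : a ≤ b)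
    (ha : ∏ j ∈ Icc 1 a, f j ≠ 0) :
    ∏ j ∈ Icc (a + 1) b, f j = (∏ j ∈ Icc 1 b, f j) / ∏ j ∈ Icc 1 a, f j := by
  have split := prod_Ioc_consecutive f (Nat.zero_le a) hab
  simp only [← Icc_add_one_left_eq_Ioc, zero_add] at split
  rw [eq_div_iff ha, mul_comm, split]

noncomputable def ballFactorial (m : ℕ) : ℝ :=
  m ! * ∏ j ∈ Icc 1 m, unitBallVol j

lemma prod_unitBallVol_pos (m : ℕ) : 0 < ∏ j ∈ Icc 1 m, unitBallVol j :=
  prod_pos fun j _ => unitBallVol_pos j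

lemma ballFactorial_pos (m : ℕ) : 0 < ballFactorial m :=
  mul_pos (Nat.cast_pos.2 m.factorial_pos) (prod_unitBallVol_pos m)

@[simp]
lemma ballFactorial_ne_zero (m : ℕ) : ballFactorial m ≠ 0 :=
  (ballFactorial_pos m).ne'

lemma volGr_eq_ballFactorial {k n : ℕ} (hkn : k ≤ n) :
    volGr k n = ballFactorial n / (ballFactorial k * ballFactorial (n - k)) := by
  rw [volGr, Nat.cast_choose ℝ hkn, ballFactorial, ballFactorial, ballFactorial]
  field_simp

lemma prod_unitBallVol_Icc_eq_ballFactorial {a b : ℕ} (hab : a ≤ b) :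
    ∏ j ∈ Icc (a + 1) b, unitBallVol j = ballFactorial b * a ! / (ballFactorial a * b !) := by
  rw [prod_Icc_add_one_eq_div _ hab (prod_unitBallVol_pos a).ne', ballFactorial, ballFactorial]
  field_simp [(prod_unitBallVol_pos a).ne']

lemma volGr_sub_div_volGr_succ {k l n : ℕ} (hkl : k ≤ l) (hln : l ≤ n) :
    volGr (n - l) (n - k) / volGr (l + 1) (n + 1) =
      ballFactorial (l + 1) * ballFactorial (n - k) /
        (ballFactorial (n + 1) * ballFactorial (l - k)) := by
  rw [volGr_eq_ballFactorial (by omega), volGr_eq_ballFactorial (by omega),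
    show n - k - (n - l) = l - k by omega, show n + 1 - (l + 1) = n - l by omega]
  field_simp

lemma volGr_succ_div_volGr_succ {k l n : ℕ} (hkl : k ≤ l) (hln : l ≤ n) :
    volGr (k + 1) (l + 1) / volGr (k + 1) (n + 1) =
      ballFactorial (l + 1) * ballFactorial (n - k) /
        (ballFactorial (n + 1) * ballFactorial (l - k)) := by
  rw [volGr_eq_ballFactorial (by omega), volGr_eq_ballFactorial (by omega),
    show l + 1 - (k + 1) = l - k by omega, show n + 1 - (k + 1) = n - k by omega]
  field_simp

lemma factorial_mul_prod_unitBallVol_div_eq_ballFactorial (k l n : ℕ) :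
    ((l + 1)! : ℝ) * (n - k)! * (∏ j ∈ Icc (l - k + 1) (l + 1), unitBallVol j) /
        ((n + 1)! * (l - k)! * ∏ j ∈ Icc (n - k + 1) (n + 1), unitBallVol j) =
      ballFactorial (l + 1) * ballFactorial (n - k) /
        (ballFactorial (n + 1) * ballFactorial (l - k)) := by
  rw [prod_unitBallVol_Icc_eq_ballFactorial (by omega),
    prod_unitBallVol_Icc_eq_ballFactorial (by omega)]
  field_simp

theorem relative_volume_psi_general (k l n : ℕ) (hkl : k ≤ l) (hln : l ≤ n) :
    volGr (n - l) (n - k) / volGr (l + 1) (n + 1) =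
      ((l + 1).factorial : ℝ) * ((n - k).factorial : ℝ) *
          (∏ j ∈ Finset.Icc (l - k + 1) (l + 1), unitBallVol j) /
        (((n + 1).factorial : ℝ) * ((l - k).factorial : ℝ) *
          (∏ j ∈ Finset.Icc (n - k + 1) (n + 1), unitBallVol j)) ∧
    volGr (k + 1) (l + 1) / volGr (k + 1) (n + 1) =
      ((l + 1).factorial : ℝ) * ((n - k).factorial : ℝ) *
          (∏ j ∈ Finset.Icc (l - k + 1) (l + 1), unitBallVol j) /
        (((n + 1).factorial : ℝ) * ((l - k).factorial : ℝ) *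
          (∏ j ∈ Finset.Icc (n - k + 1) (n + 1), unitBallVol j)) := by
  rw [factorial_mul_prod_unitBallVol_div_eq_ballFactorial]
  exact ⟨volGr_sub_div_volGr_succ hkl hln, volGr_succ_div_volGr_succ hkl hln⟩

/-- For `k ≤ l ≤ n` with `k + l ≥ n`, `A + b ∈ Graff(k,n)` and
`B + c ∈ Graff(l,n)`, the relative volume of `Ψ₊(A+b) ≅ Gr(n−l,n−k)` in
`Graff(l,n) ≅ Gr(l+1,n+1)` equals the relative volume of `Ψ₋(B+c) ≅ Graff(k,l) ≅
Gr(k+1,l+1)` in `Graff(k,n) ≅ Gr(k+1,n+1)`, the common value being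
`(l+1)!(n−k)! ∏_{j=l−k+1}^{l+1} ω_j / ((n+1)!(l−k)! ∏_{j=n−k+1}^{n+1} ω_j)`. -/
theorem relative_volume_psi (k l n : ℕ) (hkl : k ≤ l) (hln : l ≤ n) (hnkl : n ≤ k + l) :
    volGr (n - l) (n - k) / volGr (l + 1) (n + 1) =
      ((l + 1).factorial : ℝ) * ((n - k).factorial : ℝ) *
          (∏ j ∈ Finset.Icc (l - k + 1) (l + 1), unitBallVol j) /
        (((n + 1).factorial : ℝ) * ((l - k).factorial : ℝ) *
          (∏ j ∈ Finset.Icc (n - k + 1) (n + 1), unitBallVol j)) ∧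
    volGr (k + 1) (l + 1) / volGr (k + 1) (n + 1) =
      ((l + 1).factorial : ℝ) * ((n - k).factorial : ℝ) *
          (∏ j ∈ Finset.Icc (l - k + 1) (l + 1), unitBallVol j) /
        (((n + 1).factorial : ℝ) * ((l - k).factorial : ℝ) *
          (∏ j ∈ Finset.Icc (n - k + 1) (n + 1), unitBallVol j)) :=
  relative_volume_psi_general k l n hkl hln
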